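/- Let f : Λ → Γ be a surjective and locally surjective graph morphism between finite simplicial graphs. Then the right-angled Artin group A(Γ^c) embeds into A(Λ^c) via the diagonal map sending each vertex u of Γ^c to the product of the vertices in f^{-1}(u), and this embedding is a quasi-isometric embedding. -/

import Mathlib

namespace Paper

variable {V : Type*}

/-- Relators of the right-angled Artin group: commutators of adjacent vertices. -/
def raagRels (G : SimpleGraph V) : Set (FreeGroup V) :=
  {r | ∃ u v : V, G.Adj u v ∧
    r = FreeGroup.of u * FreeGroup.of v * (FreeGroup.of u)⁻¹ * (FreeGroup.of v)⁻¹}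

/-- The right-angled Artin group on a simple graph. -/
def RAAG (G : SimpleGraph V) : Type _ :=
  PresentedGroup (raagRels G)

instance (G : SimpleGraph V) : Group (RAAG G) :=
  inferInstanceAs (Group (PresentedGroup (raagRels G)))

/-- The generator of `RAAG G` corresponding to a vertex. -/
def raagOf (G : SimpleGraph V) (v : V) : RAAG G :=
  PresentedGroup.of v

/-- Evaluation of a word (a list of letters, each a vertex with a sign) in `RAAG G`. -/
def raagWord (G : SimpleGraph V) (w : List (V × Bool)) : RAAG G :=
  (w.map fun p => if p.2 then raagOf G p.1 else (raagOf G p.1)⁻¹).prod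

/-- A word is reduced if any word representing the same element is at least as long. -/
def IsReducedWord (G : SimpleGraph V) (w : List (V × Bool)) : Prop :=
  ∀ w' : List (V × Bool), raagWord G w' = raagWord G w → w.length ≤ w'.length

/-- Word length of an element of `RAAG G` with respect to the vertex generating set. -/
noncomputable def raagLength (G : SimpleGraph V) (g : RAAG G) : ℕ :=
  sInf {n | ∃ w : List (V × Bool), raagWord G w = g ∧ w.length = n}

/-! ### Basic lemmas on `raagWord` -/

def lval (G : SimpleGraph V) (l : V × Bool) : RAAG G :=
  if l.2 then raagOf G l.1 else (raagOf G l.1)⁻¹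

lemma raagWord_eq_prod (G : SimpleGraph V) (w : List (V × Bool)) :
    raagWord G w = (w.map (lval G)).prod := rfl

@[simp] lemma raagWord_nil (G : SimpleGraph V) : raagWord G [] = 1 := rfl

lemma raagWord_cons (G : SimpleGraph V) (l : V × Bool) (w : List (V × Bool)) :
    raagWord G (l :: w) = lval G l * raagWord G w := by
  simp [raagWord_eq_prod]

lemma raagWord_append (G : SimpleGraph V) (w w' : List (V × Bool)) :
    raagWord G (w ++ w') = raagWord G w * raagWord G w' := by
  simp [raagWord_eq_prod]

lemma raag_rel_one {G : SimpleGraph V} {u v : V} (h : G.Adj u v) :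
    raagOf G u * raagOf G v * (raagOf G u)⁻¹ * (raagOf G v)⁻¹ = 1 := by
  have hmem : (FreeGroup.of u * FreeGroup.of v * (FreeGroup.of u)⁻¹ * (FreeGroup.of v)⁻¹ :
      FreeGroup V) ∈ Subgroup.normalClosure (raagRels G) :=
    Subgroup.subset_normalClosure ⟨u, v, h, rfl⟩
  have : (PresentedGroup.mk (raagRels G))
      (FreeGroup.of u * FreeGroup.of v * (FreeGroup.of u)⁻¹ * (FreeGroup.of v)⁻¹) = 1 := by
    exact (QuotientGroup.eq_one_iff _).mpr hmem
  simp only [map_mul, map_inv] at this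
  exact this

lemma commute_raagOf {G : SimpleGraph V} {u v : V} (h : G.Adj u v) :
    Commute (raagOf G u) (raagOf G v) := by
  have h1 := raag_rel_one h
  have : raagOf G u * raagOf G v = raagOf G v * raagOf G u := by
    have h2 : raagOf G u * raagOf G v * ((raagOf G v * raagOf G u)⁻¹) = 1 := by
      rw [mul_inv_rev, ← mul_assoc]; exact h1
    exact mul_inv_eq_one.mp h2
  exact this

lemma commute_lval {G : SimpleGraph V} {p q : V × Bool} (h : G.Adj p.1 q.1) :
    Commute (lval G p) (lval G q) := by
  have := commute_raagOf h
  unfold lval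
  rcases p with ⟨u, _ | _⟩ <;> rcases q with ⟨v, _ | _⟩ <;>
    simp only [Bool.false_eq_true, if_false, if_true] <;>
    first
      | exact this
      | exact this.inv_left
      | exact this.inv_right
      | exact (this.inv_left).inv_right

/-! ### Reduced words machinery -/

section Machinery

variable (G : SimpleGraph V)

/-- The formal inverse of a letter. -/
def inva (l : V × Bool) : V × Bool := (l.1, !l.2)

@[simp] lemma inva_inva (l : V × Bool) : inva (inva l) = l := by
  simp [inva]

@[simp] lemma inva_fst (l : V × Bool) : (inva l).1 = l.1 := rfl

/-- Every letter of `w` is adjacent to `v`. -/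
def Blocked (v : V) (w : List (V × Bool)) : Prop := ∀ c ∈ w, G.Adj c.1 v

/-- `DelP l w`: the word `w` contains an occurrence of `inva l` preceded only by
letters adjacent to `l.1`. -/
inductive DelP (l : V × Bool) : List (V × Bool) → Prop
  | head (w) : DelP l (inva l :: w)
  | cons (c) {w} : G.Adj c.1 l.1 → DelP l w → DelP l (c :: w)

/-- `HasPat w` : the word `w` contains a cancellable pair. -/
inductive HasPat : List (V × Bool) → Prop
  | head (a) {w} : DelP G a w → HasPat (a :: w)
  | cons (c) {w} : HasPat w → HasPat (c :: w)

/-- Combinatorially reduced words. -/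
def NR (w : List (V × Bool)) : Prop := ¬ HasPat G w

open Classical in
/-- Delete the (unique) cancellable occurrence of `inva l`, if any. -/
noncomputable def del (l : V × Bool) : List (V × Bool) → Option (List (V × Bool))
  | [] => none
  | c :: w => if c = inva l then some w
      else if G.Adj c.1 l.1 then (del l w).map (c :: ·) else none

/-- Left multiplication by the letter `l` on words. -/
noncomputable def act1 (l : V × Bool) (w : List (V × Bool)) : List (V × Bool) :=
  (del G l w).getD (l :: w)

variable {G}

lemma blocked_nil (v : V) : Blocked G v [] := by intro c hc; simp at hc

lemma blocked_cons {v : V} {c : V × Bool} {w : List (V × Bool)} :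
    Blocked G v (c :: w) ↔ G.Adj c.1 v ∧ Blocked G v w := by
  constructor
  · intro h; exact ⟨h c (by simp), fun x hx => h x (by simp [hx])⟩
  · rintro ⟨h1, h2⟩ x hx
    rcases List.mem_cons.mp hx with rfl | hx
    · exact h1
    · exact h2 x hx

lemma blocked_append {v : V} {w w' : List (V × Bool)} :
    Blocked G v (w ++ w') ↔ Blocked G v w ∧ Blocked G v w' := by
  constructor
  · intro h; exact ⟨fun x hx => h x (by simp [hx]), fun x hx => h x (by simp [hx])⟩
  · rintro ⟨h1, h2⟩ x hx
    rcases List.mem_append.mp hx with hx | hx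
    · exact h1 x hx
    · exact h2 x hx

lemma delp_iff {l : V × Bool} {w : List (V × Bool)} :
    DelP G l w ↔ ∃ w₁ w₂, w = w₁ ++ inva l :: w₂ ∧ Blocked G l.1 w₁ := by
  constructor
  · intro h
    induction h with
    | head w => exact ⟨[], w, rfl, blocked_nil _⟩
    | cons c hadj _ ih =>
      obtain ⟨w₁, w₂, rfl, hb⟩ := ih
      exact ⟨c :: w₁, w₂, rfl, blocked_cons.mpr ⟨hadj, hb⟩⟩
  · rintro ⟨w₁, w₂, rfl, hb⟩
    induction w₁ with
    | nil => exact DelP.head w₂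
    | cons c w₁ ih =>
      rw [blocked_cons] at hb
      exact DelP.cons c hb.1 (ih hb.2)

lemma del_eq_some_iff {l : V × Bool} {w z : List (V × Bool)} :
    del G l w = some z ↔ ∃ w₁ w₂, w = w₁ ++ inva l :: w₂ ∧ z = w₁ ++ w₂ ∧ Blocked G l.1 w₁ := by
  classical
  constructor
  · intro h
    induction w generalizing z with
    | nil => simp [del] at h
    | cons c w ih =>
      rw [del] at h
      split_ifs at h with h1 h2
      · obtain rfl : w = z := by injection h
        exact ⟨[], w, by rw [h1]; rfl, rfl, blocked_nil _⟩
      · rcases Option.map_eq_some_iff.mp h with ⟨z', hz', rfl⟩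
        obtain ⟨w₁, w₂, rfl, rfl, hb⟩ := ih hz'
        exact ⟨c :: w₁, w₂, rfl, rfl, blocked_cons.mpr ⟨h2, hb⟩⟩
  · rintro ⟨w₁, w₂, rfl, rfl, hb⟩
    induction w₁ with
    | nil => simp [del]
    | cons c w₁ ih =>
      rw [blocked_cons] at hb
      have hcne : c ≠ inva l := by
        intro hc
        have := hb.1
        rw [hc] at this
        exact G.irrefl this
      simp only [List.cons_append, del]
      rw [if_neg hcne, if_pos hb.1, ih hb.2]
      rfl

lemma del_isSome_iff {l : V × Bool} {w : List (V × Bool)} :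
    (del G l w).isSome ↔ DelP G l w := by
  rw [Option.isSome_iff_exists, delp_iff]
  constructor
  · rintro ⟨z, hz⟩
    obtain ⟨w₁, w₂, h1, _, h3⟩ := del_eq_some_iff.mp hz
    exact ⟨w₁, w₂, h1, h3⟩
  · rintro ⟨w₁, w₂, rfl, hb⟩
    exact ⟨w₁ ++ w₂, del_eq_some_iff.mpr ⟨w₁, w₂, rfl, rfl, hb⟩⟩

lemma del_eq_none_iff {l : V × Bool} {w : List (V × Bool)} :
    del G l w = none ↔ ¬ DelP G l w := by
  rw [← del_isSome_iff, Option.not_isSome_iff_eq_none]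

lemma del_some_length {l : V × Bool} {w z : List (V × Bool)}
    (h : del G l w = some z) : z.length + 1 = w.length := by
  obtain ⟨w₁, w₂, rfl, rfl, _⟩ := del_eq_some_iff.mp h
  simp only [List.length_append, List.length_cons]
  omega

lemma act1_length_le {l : V × Bool} {w : List (V × Bool)} :
    (act1 G l w).length ≤ w.length + 1 := by
  unfold act1
  cases h : del G l w with
  | none => simp
  | some z =>
    have := del_some_length h
    simp only [Option.getD_some]
    omega

section StepShuf

variable (G)

/-- One swap of adjacent commuting letters. -/
inductive Step : List (V × Bool) → List (V × Bool) → Prop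
  | swap (x y : List (V × Bool)) (a b : V × Bool) :
      G.Adj a.1 b.1 → Step (x ++ a :: b :: y) (x ++ b :: a :: y)

/-- Shuffle equivalence. -/
def Shuf : List (V × Bool) → List (V × Bool) → Prop := Relation.ReflTransGen (Step G)

variable {G}

lemma step_symm {w w' : List (V × Bool)} (h : Step G w w') : Step G w' w := by
  cases h with
  | swap x y a b hadj => exact Step.swap x y b a hadj.symm

lemma shuf_refl (w : List (V × Bool)) : Shuf G w w := Relation.ReflTransGen.refl

lemma shuf_trans {w₁ w₂ w₃ : List (V × Bool)} (h1 : Shuf G w₁ w₂) (h2 : Shuf G w₂ w₃) :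
    Shuf G w₁ w₃ := Relation.ReflTransGen.trans h1 h2

lemma shuf_of_step {w w' : List (V × Bool)} (h : Step G w w') : Shuf G w w' :=
  Relation.ReflTransGen.single h

lemma shuf_symm {w w' : List (V × Bool)} (h : Shuf G w w') : Shuf G w' w := by
  induction h with
  | refl => exact shuf_refl _
  | tail _ hstep ih => exact shuf_trans (shuf_of_step (step_symm hstep)) ih

lemma step_cons {c : V × Bool} {w w' : List (V × Bool)} (h : Step G w w') :
    Step G (c :: w) (c :: w') := by
  cases h with
  | swap x y a b hadj => exact Step.swap (c :: x) y a b hadj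

lemma shuf_cons {c : V × Bool} {w w' : List (V × Bool)} (h : Shuf G w w') :
    Shuf G (c :: w) (c :: w') := by
  induction h with
  | refl => exact shuf_refl _
  | tail _ hstep ih => exact shuf_trans ih (shuf_of_step (step_cons hstep))

lemma step_length {w w' : List (V × Bool)} (h : Step G w w') : w.length = w'.length := by
  cases h with
  | swap x y a b hadj => simp

lemma shuf_length {w w' : List (V × Bool)} (h : Shuf G w w') : w.length = w'.length := by
  induction h with
  | refl => rfl
  | tail _ hstep ih => rw [ih, step_length hstep]

lemma shuf_bubble {t : V × Bool} {u v : List (V × Bool)} (hb : Blocked G t.1 u) :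
    Shuf G (t :: (u ++ v)) (u ++ t :: v) := by
  induction u with
  | nil => exact shuf_refl _
  | cons c u ih =>
    rw [blocked_cons] at hb
    refine shuf_trans (shuf_of_step (Step.swap [] (u ++ v) t c hb.1.symm)) ?_
    exact shuf_cons (ih hb.2)

end StepShuf

/-! ### Transfer lemmas -/

section Transfer

lemma delp_insert {c t : V × Bool} {w₁ w₂ : List (V × Bool)}
    (hadj : G.Adj t.1 c.1) (h : DelP G c (w₁ ++ w₂)) : DelP G c (w₁ ++ t :: w₂) := by
  induction w₁ with
  | nil => exact DelP.cons t hadj h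
  | cons x w₁ ih =>
    rw [List.cons_append] at h ⊢
    cases h with
    | head _ => exact DelP.head _
    | cons _ hx h => exact DelP.cons x hx (ih h)

lemma delp_append_left {c : V × Bool} {u v : List (V × Bool)}
    (h : DelP G c u) : DelP G c (u ++ v) := by
  induction h with
  | head w => exact DelP.head _
  | cons x hx _ ih => exact DelP.cons x hx ih

lemma haspat_append_right {u v : List (V × Bool)} (h : HasPat G v) : HasPat G (u ++ v) := by
  induction u with
  | nil => exact h
  | cons c u ih => exact HasPat.cons c ih

lemma haspat_append_left {u v : List (V × Bool)} (h : HasPat G u) : HasPat G (u ++ v) := by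
  induction h with
  | head a hd => exact HasPat.head a (delp_append_left hd)
  | cons c _ ih => exact HasPat.cons c ih

lemma haspat_insert {t : V × Bool} {u v : List (V × Bool)}
    (hb : Blocked G t.1 u) (h : HasPat G (u ++ v)) : HasPat G (u ++ t :: v) := by
  induction u with
  | nil => exact HasPat.cons t h
  | cons c u ih =>
    rw [blocked_cons] at hb
    rw [List.cons_append] at h ⊢
    cases h with
    | head _ hd => exact HasPat.head c (delp_insert hb.1.symm hd)
    | cons _ hp => exact HasPat.cons c (ih hb.2 hp)

lemma delp_swap {c a b : V × Bool} {x y : List (V × Bool)} (hadj : G.Adj a.1 b.1)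
    (h : DelP G c (x ++ a :: b :: y)) : DelP G c (x ++ b :: a :: y) := by
  induction x with
  | nil =>
    cases h with
    | head _ =>
      refine DelP.cons b ?_ (DelP.head _)
      exact (by simpa using hadj.symm : G.Adj b.1 (inva c).1)
    | cons _ ha h =>
      cases h with
      | head _ => exact DelP.head _
      | cons _ hb h => exact DelP.cons b hb (DelP.cons a ha h)
  | cons d x ih =>
    rw [List.cons_append] at h ⊢
    cases h with
    | head _ => exact DelP.head _
    | cons _ hd h => exact DelP.cons d hd (ih h)

lemma haspat_swap {a b : V × Bool} {x y : List (V × Bool)} (hadj : G.Adj a.1 b.1)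
    (h : HasPat G (x ++ a :: b :: y)) : HasPat G (x ++ b :: a :: y) := by
  induction x with
  | nil =>
    cases h with
    | head _ hd =>
      cases hd with
      | head _ =>
        rw [inva_fst] at hadj
        exact (G.irrefl hadj).elim
      | cons _ hb hd => exact HasPat.cons b (HasPat.head a hd)
    | cons _ hp =>
      cases hp with
      | head _ hd => exact HasPat.head b (DelP.cons a hadj hd)
      | cons _ hp => exact HasPat.cons b (HasPat.cons a hp)
  | cons d x ih =>
    rw [List.cons_append] at h ⊢
    cases h with
    | head _ hd => exact HasPat.head d (delp_swap hadj hd)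
    | cons _ hp => exact HasPat.cons d (ih hp)

lemma nr_tail {c : V × Bool} {w : List (V × Bool)} (h : NR G (c :: w)) : NR G w :=
  fun hp => h (HasPat.cons c hp)

lemma nr_act1 {l : V × Bool} {w : List (V × Bool)} (h : NR G w) : NR G (act1 G l w) := by
  unfold act1
  cases hd : del G l w with
  | none =>
    intro hp
    cases hp with
    | head _ hdp => exact (del_eq_none_iff.mp hd) hdp
    | cons _ hp => exact h hp
  | some z =>
    obtain ⟨w₁, w₂, rfl, rfl, hb⟩ := del_eq_some_iff.mp hd
    intro hp
    exact h (haspat_insert (by simpa [inva] using hb) hp)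

end Transfer

/-! ### `del` equations and the key algebraic properties of `act1` -/

section Act

lemma del_nil (l : V × Bool) : del G l [] = none := rfl

lemma del_cons_pos {l c : V × Bool} {w : List (V × Bool)} (h : c = inva l) :
    del G l (c :: w) = some w := by
  simp only [del]
  rw [if_pos h]

lemma del_cons_adj {l c : V × Bool} {w : List (V × Bool)} (h1 : c ≠ inva l)
    (h2 : G.Adj c.1 l.1) : del G l (c :: w) = (del G l w).map (c :: ·) := by
  simp only [del]
  rw [if_neg h1, if_pos h2]

lemma del_cons_nadj {l c : V × Bool} {w : List (V × Bool)} (h1 : c ≠ inva l)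
    (h2 : ¬ G.Adj c.1 l.1) : del G l (c :: w) = none := by
  simp only [del]
  rw [if_neg h1, if_neg h2]

lemma ne_inva_left {l c : V × Bool} (h : G.Adj c.1 l.1) : c ≠ inva l := by
  intro h'
  rw [h', inva_fst] at h
  exact G.irrefl h

lemma split_split {w₁ w₂ u₁ u₂ : List (V × Bool)} {x y : V × Bool}
    (h : w₁ ++ x :: w₂ = u₁ ++ y :: u₂) :
    (w₁ = u₁ ∧ x = y ∧ w₂ = u₂) ∨
    (∃ m, u₁ = w₁ ++ x :: m ∧ w₂ = m ++ y :: u₂) ∨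
    (∃ m, w₁ = u₁ ++ y :: m ∧ u₂ = m ++ x :: w₂) := by
  induction w₁ generalizing u₁ with
  | nil =>
    cases u₁ with
    | nil =>
      rw [List.nil_append, List.nil_append] at h
      injection h with h1 h2
      exact Or.inl ⟨rfl, h1, h2⟩
    | cons d u₁ =>
      rw [List.nil_append, List.cons_append] at h
      injection h with h1 h2
      right; left
      exact ⟨u₁, by rw [h1]; rfl, h2⟩
  | cons c w₁ ih =>
    cases u₁ with
    | nil =>
      rw [List.cons_append, List.nil_append] at h
      injection h with h1 h2
      right; right
      exact ⟨w₁, by rw [h1]; rfl, h2.symm⟩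
    | cons d u₁ =>
      rw [List.cons_append, List.cons_append] at h
      injection h with h1 h2
      rcases ih h2 with ⟨rfl, rfl, rfl⟩ | ⟨m, hm1, hm2⟩ | ⟨m, hm1, hm2⟩
      · exact Or.inl ⟨by rw [h1], rfl, rfl⟩
      · right; left
        exact ⟨m, by rw [h1, hm1]; rfl, hm2⟩
      · right; right
        exact ⟨m, by rw [h1, hm1]; rfl, hm2⟩

lemma del_step {w w' : List (V × Bool)} (h : Step G w w') (l : V × Bool) :
    (del G l w = none ∧ del G l w' = none) ∨
    (∃ z z', del G l w = some z ∧ del G l w' = some z' ∧ Shuf G z z') := by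
  cases h with
  | swap x y a b hadj =>
    induction x with
    | nil =>
      rw [List.nil_append, List.nil_append]
      by_cases ha : a = inva l
      · have hb : b ≠ inva l := by
          intro hb
          apply G.irrefl (v := l.1)
          have := hadj
          rw [ha, hb, inva_fst] at this
          exact this
        have hal : a.1 = l.1 := by rw [ha, inva_fst]
        have hba : G.Adj b.1 l.1 := by rw [← hal]; exact hadj.symm
        right
        refine ⟨b :: y, b :: y, del_cons_pos ha, ?_, shuf_refl _⟩
        rw [del_cons_adj hb hba, del_cons_pos ha]
        rfl
      · by_cases hb : b = inva l
        · have hbl : b.1 = l.1 := by rw [hb, inva_fst]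
          have hab : G.Adj a.1 l.1 := by rw [← hbl]; exact hadj
          right
          refine ⟨a :: y, a :: y, ?_, del_cons_pos hb, shuf_refl _⟩
          rw [del_cons_adj ha hab, del_cons_pos hb]
          rfl
        · by_cases haa : G.Adj a.1 l.1 <;> by_cases hbb : G.Adj b.1 l.1
          · rw [del_cons_adj ha haa, del_cons_adj hb hbb,
              del_cons_adj hb hbb, del_cons_adj ha haa]
            cases hy : del G l y with
            | none => left; simp
            | some z =>
              right
              refine ⟨a :: b :: z, b :: a :: z, by simp, by simp, ?_⟩
              exact shuf_of_step (Step.swap [] z a b hadj)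
          · rw [del_cons_adj ha haa, del_cons_nadj hb hbb, del_cons_nadj hb hbb]
            left; simp
          · rw [del_cons_nadj ha haa, del_cons_adj hb hbb, del_cons_nadj ha haa]
            left; simp
          · rw [del_cons_nadj ha haa, del_cons_nadj hb hbb]
            left; simp
    | cons c x ih =>
      rw [List.cons_append, List.cons_append]
      by_cases hc : c = inva l
      · right
        exact ⟨x ++ a :: b :: y, x ++ b :: a :: y, del_cons_pos hc, del_cons_pos hc,
          shuf_of_step (Step.swap x y a b hadj)⟩
      · by_cases hcc : G.Adj c.1 l.1
        · rw [del_cons_adj hc hcc, del_cons_adj hc hcc]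
          rcases ih with ⟨h1, h2⟩ | ⟨z, z', h1, h2, hs⟩
          · left; rw [h1, h2]; simp
          · right
            exact ⟨c :: z, c :: z', by rw [h1]; rfl, by rw [h2]; rfl, shuf_cons hs⟩
        · rw [del_cons_nadj hc hcc, del_cons_nadj hc hcc]
          left; exact ⟨rfl, rfl⟩

lemma act1_step {l : V × Bool} {w w' : List (V × Bool)} (h : Step G w w') :
    Shuf G (act1 G l w) (act1 G l w') := by
  rcases del_step h l with ⟨h1, h2⟩ | ⟨z, z', h1, h2, hs⟩
  · unfold act1
    rw [h1, h2]
    exact shuf_cons (shuf_of_step h)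
  · unfold act1
    rw [h1, h2]
    exact hs

lemma act1_shuf {l : V × Bool} {w w' : List (V × Bool)} (h : Shuf G w w') :
    Shuf G (act1 G l w) (act1 G l w') := by
  induction h with
  | refl => exact shuf_refl _
  | tail _ hstep ih => exact shuf_trans ih (act1_step hstep)

lemma act1_inv {l : V × Bool} {w : List (V × Bool)} (h : NR G w) :
    Shuf G (act1 G l (act1 G (inva l) w)) w := by
  cases hd : del G (inva l) w with
  | none =>
    unfold act1
    rw [hd, Option.getD_none, del_cons_pos rfl, Option.getD_some]
    exact shuf_refl _
  | some z =>
    obtain ⟨w₁, w₂, hw, rfl, hb⟩ := del_eq_some_iff.mp hd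
    rw [inva_inva] at hw
    rw [inva_fst] at hb
    have hdz : del G l (w₁ ++ w₂) = none := by
      rw [del_eq_none_iff]
      intro hdp
      apply h
      obtain ⟨u₁, u₂, he, hub⟩ := delp_iff.mp hdp
      rcases List.append_eq_append_iff.mp he with ⟨a', ha1, ha2⟩ | ⟨c', hc1, hc2⟩
      · subst hw
        apply haspat_append_right (v := l :: w₂)
        refine HasPat.head l ?_
        rw [ha2]
        refine delp_iff.mpr ⟨a', u₂, rfl, ?_⟩
        rw [ha1, blocked_append] at hub
        exact hub.2
      · cases c' with
        | nil =>
          rw [List.append_nil] at hc1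
          rw [List.nil_append] at hc2
          subst hw
          apply haspat_append_right (v := l :: w₂)
          refine HasPat.head l ?_
          rw [← hc2]
          exact delp_iff.mpr ⟨[], u₂, rfl, blocked_nil _⟩
        | cons d c'' =>
          rw [List.cons_append] at hc2
          injection hc2 with hd2 _
          have : inva l ∈ w₁ := by rw [hc1, ← hd2]; simp
          have := hb _ this
          rw [inva_fst] at this
          exact (G.irrefl this).elim
    unfold act1
    rw [hd, Option.getD_some, hdz, Option.getD_none, hw]
    exact shuf_bubble hb

lemma act1_comm_aux {a b : V × Bool} {w z : List (V × Bool)} (hadj : G.Adj a.1 b.1)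
    (hda : del G a w = some z) (hdb : del G b w = none) :
    act1 G a (act1 G b w) = b :: z ∧ act1 G b (act1 G a w) = b :: z := by
  have hbne : b ≠ inva a := ne_inva_left hadj.symm
  constructor
  · unfold act1
    rw [hdb, Option.getD_none, del_cons_adj hbne hadj.symm, hda, Option.map_some,
      Option.getD_some]
  · unfold act1
    rw [hda, Option.getD_some]
    obtain ⟨w₁, w₂, hw, rfl, hbl⟩ := del_eq_some_iff.mp hda
    have hdz : del G b (w₁ ++ w₂) = none := by
      rw [del_eq_none_iff]
      intro hdp
      have : DelP G b w := by
        rw [hw]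
        exact delp_insert (by rw [inva_fst]; exact hadj) hdp
      exact (del_eq_none_iff.mp hdb) this
    rw [hdz, Option.getD_none]

lemma del_del {a b : V × Bool} {w za zb : List (V × Bool)} (hadj : G.Adj a.1 b.1)
    (hda : del G a w = some za) (hdb : del G b w = some zb) :
    ∃ t, del G b za = some t ∧ del G a zb = some t := by
  obtain ⟨w₁, w₂, hw1, rfl, hb1⟩ := del_eq_some_iff.mp hda
  obtain ⟨u₁, u₂, hw2, rfl, hb2⟩ := del_eq_some_iff.mp hdb
  have hne : inva a ≠ inva b := by
    intro h'
    have h1 : a.1 = b.1 := by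
      have := congrArg Prod.fst h'
      simpa [inva] using this
    rw [h1] at hadj
    exact G.irrefl hadj
  rcases split_split (hw1.symm.trans hw2) with ⟨_, hxy, _⟩ | ⟨m, hm1, hm2⟩ | ⟨m, hm1, hm2⟩
  · exact absurd hxy hne
  · refine ⟨w₁ ++ (m ++ u₂), ?_, ?_⟩
    · refine del_eq_some_iff.mpr ⟨w₁ ++ m, u₂, ?_, by rw [List.append_assoc], ?_⟩
      · rw [hm2, List.append_assoc]
      · rw [hm1, blocked_append, blocked_cons] at hb2
        rw [blocked_append]
        exact ⟨hb2.1, hb2.2.2⟩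
    · refine del_eq_some_iff.mpr ⟨w₁, m ++ u₂, ?_, rfl, hb1⟩
      rw [hm1, List.append_assoc, List.cons_append]
  · refine ⟨u₁ ++ (m ++ w₂), ?_, ?_⟩
    · refine del_eq_some_iff.mpr ⟨u₁, m ++ w₂, ?_, rfl, hb2⟩
      rw [hm1, List.append_assoc, List.cons_append]
    · refine del_eq_some_iff.mpr ⟨u₁ ++ m, w₂, ?_, by rw [List.append_assoc], ?_⟩
      · rw [hm2, List.append_assoc]
      · rw [hm1, blocked_append, blocked_cons] at hb1
        rw [blocked_append]
        exact ⟨hb1.1, hb1.2.2⟩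

lemma act1_comm {a b : V × Bool} (hadj : G.Adj a.1 b.1) (w : List (V × Bool)) :
    Shuf G (act1 G a (act1 G b w)) (act1 G b (act1 G a w)) := by
  cases hda : del G a w with
  | none =>
    cases hdb : del G b w with
    | none =>
      have hane : a ≠ inva b := ne_inva_left hadj
      have hbne : b ≠ inva a := ne_inva_left hadj.symm
      unfold act1
      rw [hda, Option.getD_none, hdb, Option.getD_none,
        del_cons_adj hane hadj, del_cons_adj hbne hadj.symm, hda, hdb]
      simp only [Option.map_none, Option.getD_none]
      exact shuf_of_step (Step.swap [] w a b hadj)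
    | some zb =>
      obtain ⟨h1, h2⟩ := act1_comm_aux hadj.symm hdb hda
      rw [h2, h1]
      exact shuf_refl _
  | some za =>
    cases hdb : del G b w with
    | none =>
      obtain ⟨h1, h2⟩ := act1_comm_aux hadj hda hdb
      rw [h1, h2]
      exact shuf_refl _
    | some zb =>
      obtain ⟨t, h1, h2⟩ := del_del hadj hda hdb
      unfold act1
      rw [hda, Option.getD_some, hdb, Option.getD_some, h1, h2]
      exact shuf_refl _

end Act

/-! ### The action on shuffle classes of reduced words -/

section Action

variable (G)

def NRWord : Type _ := {w : List (V × Bool) // NR G w}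

instance nrSetoid : Setoid (NRWord G) :=
  ⟨fun x y => Shuf G x.1 y.1, fun _ => shuf_refl _, shuf_symm, shuf_trans⟩

def ShufClass : Type _ := Quotient (nrSetoid G)

noncomputable def act1' (l : V × Bool) : ShufClass G → ShufClass G :=
  Quotient.map (fun x => ⟨act1 G l x.1, nr_act1 x.2⟩) (fun _ _ h => act1_shuf h)

noncomputable def actPerm (v : V) : Equiv.Perm (ShufClass G) where
  toFun := act1' G (v, true)
  invFun := act1' G (v, false)
  left_inv := by
    intro s
    induction s using Quotient.ind with
    | _ x => exact Quotient.sound (act1_inv (l := (v, false)) x.2)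
  right_inv := by
    intro s
    induction s using Quotient.ind with
    | _ x => exact Quotient.sound (act1_inv (l := (v, true)) x.2)

lemma actPerm_comm {u v : V} (h : G.Adj u v) :
    Commute (actPerm G u) (actPerm G v) := by
  apply Equiv.ext
  intro s
  induction s using Quotient.ind with
  | _ x =>
    show act1' G (u, true) (act1' G (v, true) ⟦x⟧) = act1' G (v, true) (act1' G (u, true) ⟦x⟧)
    exact Quotient.sound (act1_comm (a := (u, true)) (b := (v, true)) h x.1)

noncomputable def raagPerm : RAAG G →* Equiv.Perm (ShufClass G) :=
  PresentedGroup.toGroup (f := fun v => actPerm G v) (by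
    rintro r ⟨u, v, hadj, rfl⟩
    simp only [map_mul, map_inv, FreeGroup.lift_apply_of]
    have hc := actPerm_comm G hadj
    rw [hc.eq]
    group)

variable {G}

lemma raagPerm_word (w : List (V × Bool)) (s : ShufClass G) :
    raagPerm G (raagWord G w) s = w.foldr (act1' G) s := by
  induction w with
  | nil => rw [raagWord_nil, map_one]; rfl
  | cons l w ih =>
    rw [raagWord_cons, map_mul, Equiv.Perm.mul_apply, ih, List.foldr_cons]
    rcases l with ⟨v, b⟩
    cases b with
    | true =>
      have : raagPerm G (lval G (v, true)) = actPerm G v := by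
        show raagPerm G (raagOf G v) = _
        exact PresentedGroup.toGroup.of _
      rw [this]
      rfl
    | false =>
      have : raagPerm G (lval G (v, false)) = (actPerm G v)⁻¹ := by
        show raagPerm G (raagOf G v)⁻¹ = _
        rw [map_inv]
        have h2 : raagPerm G (raagOf G v) = actPerm G v := PresentedGroup.toGroup.of _
        rw [h2]
      rw [this]
      rfl

lemma nr_nil : NR G [] := by intro hp; cases hp

noncomputable def emptyClass (G : SimpleGraph V) : ShufClass G := ⟦⟨[], nr_nil⟩⟧

lemma nr_word_fold : ∀ (w : List (V × Bool)) (h : NR G w),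
    w.foldr (act1' G) (emptyClass G) = ⟦⟨w, h⟩⟧
  | [], _ => rfl
  | l :: w, h => by
    have hw := nr_tail h
    rw [List.foldr_cons, nr_word_fold w hw]
    have hdel : del G l w = none := del_eq_none_iff.mpr (fun hdp => h (HasPat.head l hdp))
    show Quotient.map _ _ ⟦(⟨w, hw⟩ : NRWord G)⟧ = _
    show Quotient.mk (nrSetoid G) (⟨act1 G l w, nr_act1 hw⟩ : NRWord G) = _
    apply Quotient.sound
    show Shuf G (act1 G l w) (l :: w)
    unfold act1
    rw [hdel, Option.getD_none]
    exact shuf_refl _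

noncomputable def clen : ShufClass G → ℕ :=
  Quotient.lift (fun x : NRWord G => x.1.length) (fun _ _ h => shuf_length h)

lemma clen_act1' (l : V × Bool) (s : ShufClass G) :
    clen (act1' G l s) ≤ clen s + 1 := by
  induction s using Quotient.ind with
  | _ x => exact act1_length_le

lemma clen_fold (w : List (V × Bool)) :
    clen (w.foldr (act1' G) (emptyClass G)) ≤ w.length := by
  induction w with
  | nil => exact le_refl 0
  | cons l w ih =>
    rw [List.foldr_cons, List.length_cons]
    exact le_trans (clen_act1' l _) (by omega)

theorem nr_isReduced {w : List (V × Bool)} (h : NR G w) : IsReducedWord G w := by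
  intro w' hw'
  have e1 : raagPerm G (raagWord G w) (emptyClass G) = ⟦⟨w, h⟩⟧ := by
    rw [raagPerm_word]; exact nr_word_fold w h
  have e2 : raagPerm G (raagWord G w') (emptyClass G) = w'.foldr (act1' G) (emptyClass G) :=
    raagPerm_word w' _
  rw [hw'] at e2
  have : clen (⟦⟨w, h⟩⟧ : ShufClass G) ≤ w'.length := by
    rw [← e1, e2]
    exact clen_fold w'
  exact this

/-! ### Existence of reduced words -/

lemma lval_inva (l : V × Bool) : lval G l * lval G (inva l) = 1 := by
  rcases l with ⟨v, b⟩
  cases b <;> simp [lval, inva]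

lemma lval_inva' (l : V × Bool) : lval G (inva l) = (lval G l)⁻¹ := by
  rcases l with ⟨v, b⟩
  cases b <;> simp [lval, inva]

lemma raagWord_inv (w : List (V × Bool)) :
    raagWord G (w.reverse.map inva) = (raagWord G w)⁻¹ := by
  induction w with
  | nil => simp
  | cons l w ih =>
    rw [raagWord_cons, List.reverse_cons, List.map_append, raagWord_append, ih]
    simp only [List.map_cons, List.map_nil]
    rw [mul_inv_rev]
    congr 1
    rw [raagWord_cons, raagWord_nil, mul_one]
    exact lval_inva' l

lemma exists_word (g : RAAG G) : ∃ w, raagWord G w = g := by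
  have hg : g ∈ Subgroup.closure (Set.range (raagOf G)) := by
    have : Set.range (raagOf G) = Set.range (PresentedGroup.of (rels := raagRels G)) := rfl
    rw [show Subgroup.closure (Set.range (raagOf G)) = ⊤ by
      rw [this]; exact PresentedGroup.closure_range_of _]
    trivial
  refine Subgroup.closure_induction ?_ ?_ ?_ ?_ hg
  · rintro x ⟨v, rfl⟩
    exact ⟨[(v, true)], by rw [raagWord_cons, raagWord_nil, mul_one]; rfl⟩
  · exact ⟨[], rfl⟩
  · rintro x y _ _ ⟨w1, rfl⟩ ⟨w2, rfl⟩
    exact ⟨w1 ++ w2, raagWord_append G w1 w2⟩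
  · rintro x _ ⟨w, rfl⟩
    exact ⟨w.reverse.map inva, raagWord_inv w⟩

lemma haspat_shorter {w : List (V × Bool)} (h : HasPat G w) :
    ∃ w', raagWord G w' = raagWord G w ∧ w'.length + 2 = w.length := by
  induction h with
  | head a hd =>
    obtain ⟨y₁, y₂, rfl, hb⟩ := delp_iff.mp hd
    refine ⟨y₁ ++ y₂, ?_, by simp only [List.length_append, List.length_cons]; omega⟩
    have hcomm : Commute (lval G a) (raagWord G y₁) := by
      rw [raagWord_eq_prod]
      apply Commute.list_prod_right
      intro x hx
      rw [List.mem_map] at hx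
      obtain ⟨c, hc, rfl⟩ := hx
      exact commute_lval ((hb c hc).symm)
    have key : lval G a * (raagWord G y₁ * (lval G (inva a) * raagWord G y₂)) =
        raagWord G y₁ * raagWord G y₂ := by
      rw [← mul_assoc, hcomm.eq, mul_assoc, ← mul_assoc (lval G a), lval_inva, one_mul]
    rw [raagWord_append, raagWord_cons, raagWord_append, raagWord_cons, key]
  | cons c _ ih =>
    obtain ⟨w', he, hl⟩ := ih
    exact ⟨c :: w', by rw [raagWord_cons, raagWord_cons, he],
      by simp only [List.length_cons]; omega⟩

lemma exists_nr_word (g : RAAG G) : ∃ w, NR G w ∧ raagWord G w = g := by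
  obtain ⟨w, rfl⟩ := exists_word g
  suffices h : ∀ n (w : List (V × Bool)), w.length ≤ n →
      ∃ w', NR G w' ∧ raagWord G w' = raagWord G w by exact h w.length w le_rfl
  intro n
  induction n with
  | zero =>
    intro w hw
    rw [Nat.le_zero, List.length_eq_zero_iff] at hw
    subst hw
    exact ⟨[], nr_nil, rfl⟩
  | succ n ih =>
    intro w hw
    by_cases hp : HasPat G w
    · obtain ⟨w', he, hl⟩ := haspat_shorter hp
      obtain ⟨w'', hnr, he'⟩ := ih w' (by omega)
      exact ⟨w'', hnr, by rw [he', he]⟩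
    · exact ⟨w, hp, rfl⟩

theorem raagLength_eq_of_nr {w : List (V × Bool)} {g : RAAG G} (h : NR G w)
    (hw : raagWord G w = g) : raagLength G g = w.length := by
  apply le_antisymm
  · exact Nat.sInf_le ⟨w, hw, rfl⟩
  · refine le_csInf ⟨w.length, ⟨w, hw, rfl⟩⟩ ?_
    rintro n ⟨w', hw', rfl⟩
    exact nr_isReduced h w' (by rw [hw', hw])

end Action

section AppendCases

lemma delp_append_cases {c : V × Bool} {x y : List (V × Bool)} (h : DelP G c (x ++ y)) :
    (∃ x₁ x₂, x = x₁ ++ inva c :: x₂ ∧ Blocked G c.1 x₁) ∨ (Blocked G c.1 x ∧ DelP G c y) := by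
  induction x with
  | nil => right; exact ⟨blocked_nil _, h⟩
  | cons d x ih =>
    rw [List.cons_append] at h
    cases h with
    | head _ => left; exact ⟨[], x, rfl, blocked_nil _⟩
    | cons _ hd h =>
      rcases ih h with ⟨x₁, x₂, rfl, hb⟩ | ⟨hb, hd2⟩
      · left; exact ⟨d :: x₁, x₂, rfl, blocked_cons.mpr ⟨hd, hb⟩⟩
      · right; exact ⟨blocked_cons.mpr ⟨hd, hb⟩, hd2⟩

lemma haspat_append_cases {x y : List (V × Bool)} (h : HasPat G (x ++ y)) :
    (∃ x₁ a x₂, x = x₁ ++ a :: x₂ ∧ DelP G a (x₂ ++ y)) ∨ HasPat G y := by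
  induction x with
  | nil => right; exact h
  | cons d x ih =>
    rw [List.cons_append] at h
    cases h with
    | head _ hd => left; exact ⟨[], d, x, rfl, hd⟩
    | cons _ hp =>
      rcases ih hp with ⟨x₁, a, x₂, rfl, hd⟩ | hp2
      · left; exact ⟨d :: x₁, a, x₂, rfl, hd⟩
      · right; exact hp2

lemma raagWord_true_list (lst : List V) :
    raagWord G (lst.map (fun v => (v, true))) = (lst.map (raagOf G)).prod := by
  induction lst with
  | nil => simp
  | cons c t ih =>
    rw [List.map_cons, raagWord_cons, List.map_cons, List.prod_cons, ih]
    rfl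

lemma raagWord_false_rev (lst : List V) :
    raagWord G (lst.reverse.map (fun v => (v, false))) = ((lst.map (raagOf G)).prod)⁻¹ := by
  induction lst with
  | nil => simp
  | cons c t ih =>
    rw [List.reverse_cons, List.map_append, raagWord_append, ih]
    rw [show (List.map (raagOf G) (c :: t)).prod = raagOf G c * (List.map (raagOf G) t).prod by
      rw [List.map_cons, List.prod_cons]]
    rw [mul_inv_rev]
    have h1 : raagWord G [(c, false)] = (raagOf G c)⁻¹ := by
      rw [raagWord_cons, raagWord_nil, mul_one]; rfl
    rw [List.map_cons, List.map_nil, h1]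

end AppendCases

end Machinery

/-! ### Word expansion along a fibration -/

def expandW {α β : Type*} (blk : α → List β) : List α → List β
  | [] => []
  | l :: w => blk l ++ expandW blk w

@[simp] lemma expandW_nil {α β : Type*} (blk : α → List β) : expandW blk [] = [] := rfl

@[simp] lemma expandW_cons {α β : Type*} (blk : α → List β) (l : α) (w : List α) :
    expandW blk (l :: w) = blk l ++ expandW blk w := rfl


/-! ### The main theorem -/

/-- A surjective, locally surjective graph morphism `f : Λ → Γ` induces
an injective, quasi-isometric diagonal embedding `A(Γ^c) → A(Λ^c)`. -/
theorem kapovich_embedding_raag {VΛ VΓ : Type*} [Fintype VΛ] [Fintype VΓ]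
    (Λ : SimpleGraph VΛ) (Γ : SimpleGraph VΓ) (f : VΛ → VΓ)
    (hmap : ∀ a b, Λ.Adj a b → Γ.Adj (f a) (f b))
    (hsurj : Function.Surjective f)
    (hloc : ∀ (v : VΛ) (u : VΓ), Γ.Adj (f v) u → ∃ v', Λ.Adj v v' ∧ f v' = u) :
    ∃ φ : RAAG Γᶜ →* RAAG Λᶜ, Function.Injective φ ∧
      (∀ u : VΓ, ∃ l : List VΛ, l.Nodup ∧ (∀ v, v ∈ l ↔ f v = u) ∧
        φ (raagOf Γᶜ u) = (l.map (raagOf Λᶜ)).prod) ∧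
      ∃ L : ℕ, 0 < L ∧ ∀ g : RAAG Γᶜ,
        raagLength Γᶜ g ≤ L * raagLength Λᶜ (φ g) ∧
        raagLength Λᶜ (φ g) ≤ L * raagLength Γᶜ g := by
  classical
  set fib : VΓ → List VΛ := fun u => (Finset.univ.filter fun v => f v = u).toList with hfib
  have hfibmem : ∀ u v, v ∈ fib u ↔ f v = u := by
    intro u v
    simp [hfib]
  have hfibnodup : ∀ u, (fib u).Nodup := fun u => Finset.nodup_toList _
  have hfibne : ∀ u, fib u ≠ [] := by
    intro u h
    obtain ⟨v, hv⟩ := hsurj u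
    have hmem := (hfibmem u v).mpr hv
    rw [h] at hmem
    exact absurd hmem (List.not_mem_nil (a := v))
  have hfibpos : ∀ u, 0 < (fib u).length := fun u => List.length_pos_iff.mpr (hfibne u)
  have hfiblen : ∀ u, (fib u).length ≤ Fintype.card VΛ := by
    intro u
    have h1 : (fib u).length = (Finset.univ.filter fun v => f v = u).card :=
      Finset.length_toList _
    rw [h1]
    exact le_trans (Finset.card_filter_le _ _) (le_of_eq (Finset.card_univ))
  have hreflect : ∀ {a b : VΛ}, (Γᶜ).Adj (f a) (f b) → (Λᶜ).Adj a b := by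
    intro a b h
    rw [SimpleGraph.compl_adj] at h ⊢
    refine ⟨fun hab => h.1 (by rw [hab]), fun hadj => h.2 (hmap a b hadj)⟩
  set D : VΓ → RAAG Λᶜ := fun u => ((fib u).map (raagOf Λᶜ)).prod with hD
  have hcommD : ∀ {u v : VΓ}, (Γᶜ).Adj u v → Commute (D u) (D v) := by
    intro u v huv
    apply Commute.list_prod_right
    intro x hx
    rw [List.mem_map] at hx
    obtain ⟨b, hb, rfl⟩ := hx
    apply Commute.list_prod_left
    intro y hy
    rw [List.mem_map] at hy
    obtain ⟨a, ha, rfl⟩ := hy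
    refine commute_raagOf (hreflect ?_)
    rw [(hfibmem u a).mp ha, (hfibmem v b).mp hb]
    exact huv
  have hrels : ∀ r ∈ raagRels Γᶜ, FreeGroup.lift D r = 1 := by
    rintro r ⟨u, v, huv, rfl⟩
    simp only [map_mul, map_inv, FreeGroup.lift_apply_of]
    rw [(hcommD huv).eq]
    group
  refine ⟨PresentedGroup.toGroup hrels, ?_, ?_, ?_⟩
  case refine_2 =>
    intro u
    exact ⟨fib u, hfibnodup u, fun v => hfibmem u v, PresentedGroup.toGroup.of hrels⟩
  all_goals {
    set φ : RAAG Γᶜ →* RAAG Λᶜ := PresentedGroup.toGroup hrels with hφ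
    have hφof : ∀ u, φ (raagOf Γᶜ u) = D u := fun u => PresentedGroup.toGroup.of hrels
    set blk : VΓ × Bool → List (VΛ × Bool) := fun l =>
      if l.2 then (fib l.1).map (fun v => (v, true))
      else (fib l.1).reverse.map (fun v => (v, false)) with hblk
    have hblkword : ∀ l, raagWord Λᶜ (blk l) = φ (lval Γᶜ l) := by
      rintro ⟨u, b⟩
      cases b
      · have h1 : blk (u, false) = (fib u).reverse.map (fun v => (v, false)) := by
          simp [hblk]
        have h2 : lval Γᶜ (u, false) = (raagOf Γᶜ u)⁻¹ := rfl
        rw [h1, h2, raagWord_false_rev, map_inv, hφof]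
      · have h1 : blk (u, true) = (fib u).map (fun v => (v, true)) := by simp [hblk]
        have h2 : lval Γᶜ (u, true) = raagOf Γᶜ u := rfl
        rw [h1, h2, raagWord_true_list, hφof]
    have hexp : ∀ w, raagWord Λᶜ (expandW blk w) = φ (raagWord Γᶜ w) := by
      intro w
      induction w with
      | nil => simp
      | cons l w ih =>
        rw [expandW_cons, raagWord_append, ih, raagWord_cons, map_mul, hblkword]
    have hblklen : ∀ l : VΓ × Bool, (blk l).length = (fib l.1).length := by
      rintro ⟨u, b⟩
      cases b <;> simp [hblk]
    have hlen1 : ∀ w : List (VΓ × Bool), w.length ≤ (expandW blk w).length := by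
      intro w
      induction w with
      | nil => simp
      | cons l w ih =>
        rw [expandW_cons, List.length_append, List.length_cons, hblklen]
        have := hfibpos l.1
        omega
    have hlen2 : ∀ w : List (VΓ × Bool),
        (expandW blk w).length ≤ Fintype.card VΛ * w.length := by
      intro w
      induction w with
      | nil => simp
      | cons l w ih =>
        rw [expandW_cons, List.length_append, List.length_cons, hblklen, Nat.mul_succ]
        have := hfiblen l.1
        omega
    have hblkvert : ∀ (l : VΓ × Bool) (c : VΛ × Bool), c ∈ blk l → f c.1 = l.1 ∧ c.2 = l.2 := by
      rintro ⟨u, b⟩ c hc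
      cases b
      · have h1 : blk (u, false) = (fib u).reverse.map (fun v => (v, false)) := by
          simp [hblk]
        rw [h1, List.mem_map] at hc
        obtain ⟨v, hv, rfl⟩ := hc
        rw [List.mem_reverse] at hv
        exact ⟨(hfibmem u v).mp hv, rfl⟩
      · have h1 : blk (u, true) = (fib u).map (fun v => (v, true)) := by simp [hblk]
        rw [h1, List.mem_map] at hc
        obtain ⟨v, hv, rfl⟩ := hc
        exact ⟨(hfibmem u v).mp hv, rfl⟩
    have hblkmem : ∀ (l : VΓ × Bool) (v : VΛ), f v = l.1 → (v, l.2) ∈ blk l := by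
      rintro ⟨u, b⟩ v hv
      cases b
      · have h1 : blk (u, false) = (fib u).reverse.map (fun v => (v, false)) := by
          simp [hblk]
        rw [h1, List.mem_map]
        exact ⟨v, List.mem_reverse.mpr ((hfibmem u v).mpr hv), rfl⟩
      · have h1 : blk (u, true) = (fib u).map (fun v => (v, true)) := by simp [hblk]
        rw [h1, List.mem_map]
        exact ⟨v, (hfibmem u v).mpr hv, rfl⟩
    have hloc' : ∀ (a : VΛ) (u : VΓ), (∀ v', f v' = u → (Λᶜ).Adj v' a) →
        (Γᶜ).Adj u (f a) ∨ f a = u := by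
      intro a u hall
      by_cases h1 : f a = u
      · right; exact h1
      · left
        rw [SimpleGraph.compl_adj]
        refine ⟨fun h => h1 h.symm, ?_⟩
        intro hΓ
        obtain ⟨v', hv'adj, hv'f⟩ := hloc a u hΓ.symm
        have h2 := hall v' hv'f
        rw [SimpleGraph.compl_adj] at h2
        exact h2.2 hv'adj.symm
    have hdelpE : ∀ (a : VΛ × Bool) (w : List (VΓ × Bool)),
        DelP (Λᶜ) a (expandW blk w) → DelP (Γᶜ) (f a.1, a.2) w := by
      intro a w
      induction w with
      | nil =>
        intro h
        rw [expandW_nil] at h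
        cases h
      | cons l w ih =>
        intro h
        rw [expandW_cons] at h
        rcases delp_append_cases h with ⟨x₁, x₂, hx, _⟩ | ⟨hb, hd⟩
        · have hmem : inva a ∈ blk l := by rw [hx]; simp
          obtain ⟨h1, h2⟩ := hblkvert l _ hmem
          rw [inva_fst] at h1
          rcases l with ⟨lu, lb⟩
          have h2' : (!a.2) = lb := h2
          have h1' : f a.1 = lu := h1
          rw [← h1', ← h2']
          exact DelP.head w
        · have hadjall : ∀ v', f v' = l.1 → (Λᶜ).Adj v' a.1 := by
            intro v' hv'
            exact hb (v', l.2) (hblkmem l v' hv')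
          rcases hloc' a.1 l.1 hadjall with hadj | heq
          · exact DelP.cons l hadj (ih hd)
          · exact (((Λᶜ : SimpleGraph VΛ)).irrefl (hadjall a.1 heq)).elim
    have hNRE : ∀ w, NR (Γᶜ) w → NR (Λᶜ) (expandW blk w) := by
      intro w
      induction w with
      | nil => intro _; exact nr_nil
      | cons l w ih =>
        intro hnr hp
        rw [expandW_cons] at hp
        rcases haspat_append_cases hp with ⟨x₁, a, x₂, hx, hd⟩ | hp2
        · have hmem : a ∈ blk l := by rw [hx]; simp
          obtain ⟨h1, h2⟩ := hblkvert l a hmem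
          rcases delp_append_cases hd with ⟨y₁, y₂, hy, _⟩ | ⟨_, hd2⟩
          · have hmem2 : inva a ∈ blk l := by rw [hx, hy]; simp
            obtain ⟨_, h4⟩ := hblkvert l _ hmem2
            have h4' : (!a.2) = l.2 := h4
            rw [h2] at h4'
            cases l.2 <;> simp at h4'
          · have h5 := hdelpE a w hd2
            rw [h1, h2] at h5
            apply hnr
            have h6 : (l.1, l.2) = l := rfl
            rw [h6] at h5
            exact HasPat.head l h5
        · exact ih (nr_tail hnr) hp2
    clear hblkvert hblkmem hloc' hdelpE
    first
    | · -- injectivity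
        rw [injective_iff_map_eq_one]
        intro g hg
        obtain ⟨w, hnr, hw⟩ := exists_nr_word g
        have h1 : raagLength Λᶜ (1 : RAAG Λᶜ) = 0 :=
          raagLength_eq_of_nr nr_nil (raagWord_nil Λᶜ)
        have h2 : raagLength Λᶜ (1 : RAAG Λᶜ) = (expandW blk w).length := by
          apply raagLength_eq_of_nr (hNRE w hnr)
          rw [hexp, hw, hg]
        have h3 := hlen1 w
        rw [h1] at h2
        have h4 : w.length = 0 := by omega
        rw [List.length_eq_zero_iff] at h4
        rw [← hw, h4, raagWord_nil]
    | · refine ⟨Fintype.card VΛ + 1, Nat.succ_pos _, ?_⟩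
        intro g
        obtain ⟨w, hnr, hw⟩ := exists_nr_word g
        have e1 : raagLength Γᶜ g = w.length := raagLength_eq_of_nr hnr hw
        have e2 : raagLength Λᶜ (φ g) = (expandW blk w).length := by
          apply raagLength_eq_of_nr (hNRE w hnr)
          rw [hexp, hw]
        constructor
        · rw [e1, e2]
          calc w.length ≤ (expandW blk w).length := hlen1 w
            _ ≤ (Fintype.card VΛ + 1) * (expandW blk w).length :=
              Nat.le_mul_of_pos_left _ (Nat.succ_pos _)
        · rw [e1, e2]
          calc (expandW blk w).length ≤ Fintype.card VΛ * w.length := hlen2 w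
            _ ≤ (Fintype.card VΛ + 1) * w.length :=
              Nat.mul_le_mul_right _ (Nat.le_succ _)
  }

end Paper
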